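/- Under the admissibility constraints, with p_con ∈ (0,1], γ ≥ 0 and H ∈ [0, 3/4], the denominator δ + δ′·q + δ″·q² is strictly positive for all q ∈ [0,1], and the mean occupancy time E_occ(q) := (ε + ε′·q)/(δ + δ′·q + δ″·q²) is non-increasing on [0,1]: for all 0 ≤ q₁ ≤ q₂ ≤ 1, E_occ(q₂) ≤ E_occ(q₁). -/

import Mathlib

/-- Binomial weight `w_k = (n choose k)·p_gen^k·(1 − p_gen)^(n−k)`. -/
noncomputable def wgt (n : ℕ) (p : ℝ) (k : ℕ) : ℝ :=
  (n.choose k : ℝ) * p ^ k * (1 - p) ^ (n - k)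

/-- Aggregated coefficient, e.g. `ã = Σ_{k=1}^n a_k·w_k`. -/
noncomputable def agg (n : ℕ) (p : ℝ) (f : ℕ → ℝ) : ℝ :=
  ∑ k ∈ Finset.Icc 1 n, f k * wgt n p k

/-- Admissibility constraints on the purification coefficients
`a_k, b_k, c_k, d_k` for `k = 1, …, n`. -/
def Admissible (n : ℕ) (a b c d : ℕ → ℝ) : Prop :=
  ∀ k ∈ Finset.Icc 1 n,
    (0 ≤ d k ∧ d k ≤ 1) ∧
    (-(4/3) * d k ≤ c k ∧ c k ≤ (4/3) * (1 - d k)) ∧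
    (0 ≤ b k ∧ b k ≤ (3/4) * d k) ∧
    (-(4/3) * b k ≤ a k ∧ a k ≤ -(4/3) * b k + (3/4) * c k + d k)

lemma sum_wgt (n : ℕ) (p : ℝ) :
    ∑ k ∈ Finset.Icc 1 n, wgt n p k = 1 - (1 - p) ^ n := by
  have h := add_pow p (1 - p) n
  rw [show p + (1 - p) = (1:ℝ) by ring, one_pow] at h
  have h1 : ∑ k ∈ Finset.range (n+1), wgt n p k = 1 := by
    rw [h]
    exact Finset.sum_congr rfl (fun k _ => by unfold wgt; ring)
  have h2 : ∑ k ∈ Finset.range (n+1), wgt n p k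
      = (∑ k ∈ Finset.Icc 1 n, wgt n p k) + wgt n p 0 := by
    rw [Finset.sum_range_succ', ← Finset.Ico_add_one_right_eq_Icc, Finset.sum_Ico_eq_sum_range]
    simp only [Nat.add_sub_cancel]
    congr 1
    exact Finset.sum_congr rfl (fun i _ => by rw [add_comm i 1])
  have h0 : wgt n p 0 = (1-p)^n := by simp [wgt]
  rw [h2, h0] at h1
  linarith

lemma wgt_nonneg (n : ℕ) (p : ℝ) (hp : p ∈ Set.Icc (0:ℝ) 1) (k : ℕ) :
    0 ≤ wgt n p k := by
  obtain ⟨h0, h1⟩ := hp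
  unfold wgt
  have : (0:ℝ) ≤ 1 - p := by linarith
  positivity

/-- The purely scalar consequences of the aggregated admissibility bounds. -/
lemma scalar_facts (pcon γ H P aa bb cc dd : ℝ)
    (hs0 : 0 < pcon) (hs1 : pcon ≤ 1) (hγ : 0 ≤ γ)
    (hH0 : 0 ≤ H) (hH1 : H ≤ 3/4)
    (hd0 : 0 ≤ dd) (hdP : dd ≤ P) (hb0 : 0 ≤ bb) (hbd : bb ≤ (3/4) * dd)
    (hclo : -(4/3) * dd ≤ cc) (hchi : cc ≤ (4/3) * (P - dd))
    (halo : -(4/3) * bb ≤ aa) (hahi : aa ≤ -(4/3) * bb + (3/4) * cc + dd) :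
    0 ≤ P - aa + H * cc ∧
    0 ≤ γ * P + 2 * pcon * P - pcon * aa - (γ + pcon) * dd ∧
    0 ≤ P ^ 2 - P * aa - P * dd + aa * dd - bb * cc ∧
    0 ≤ γ * (P - dd) + pcon * (P - dd - H * cc) := by
  have hPa : aa ≤ P := by linarith
  have hHc : H * cc ≤ P - dd := by
    rcases le_or_gt cc 0 with h | h
    · nlinarith
    · nlinarith
  refine ⟨?_, ?_, ?_, ?_⟩
  · rcases le_or_gt cc 0 with h | h
    · nlinarith [mul_nonneg (show (0:ℝ) ≤ 3/4 - H by linarith)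
        (show (0:ℝ) ≤ -cc by linarith)]
    · nlinarith [mul_nonneg hH0 (le_of_lt h)]
  · nlinarith [mul_nonneg hγ (show (0:ℝ) ≤ P - dd by linarith),
      mul_nonneg (le_of_lt hs0) (show (0:ℝ) ≤ (P - aa) + (P - dd) by linarith)]
  · rcases le_or_gt cc 0 with h | h
    · nlinarith [mul_nonneg (show (0:ℝ) ≤ P - aa by linarith)
        (show (0:ℝ) ≤ P - dd by linarith), mul_nonneg hb0 (neg_nonneg.2 h)]
    · nlinarith [mul_nonneg (show (0:ℝ) ≤ (P - dd) + (4/3) * bb by linarith)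
        (show (0:ℝ) ≤ (P - dd) - (3/4) * cc by linarith),
        mul_le_mul_of_nonneg_right hahi (show (0:ℝ) ≤ P - dd by linarith)]
  · nlinarith [mul_nonneg hγ (show (0:ℝ) ≤ P - dd by linarith),
      mul_nonneg (le_of_lt hs0) (show (0:ℝ) ≤ P - dd - H * cc by linarith)]

/-- Positivity of the denominator and the cross-multiplied monotonicity,
in purely scalar form. -/
lemma scalar_main (pcon γ ε ε' δ δ' δ'' : ℝ)
    (hε : ε = γ + pcon) (hs0 : 0 < pcon) (hγ : 0 ≤ γ)
    (hδ0 : 0 < δ) (hδ'0 : 0 ≤ δ') (hδ''0 : 0 ≤ δ'')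
    (hε'0 : 0 ≤ ε') (hA : 0 ≤ ε * δ' - ε' * δ) :
    (∀ q ∈ Set.Icc (0:ℝ) 1, 0 < δ + δ' * q + δ'' * q ^ 2) ∧
    (∀ q₁ q₂ : ℝ, 0 ≤ q₁ → q₁ ≤ q₂ → q₂ ≤ 1 →
      (ε + ε' * q₂) / (δ + δ' * q₂ + δ'' * q₂ ^ 2)
        ≤ (ε + ε' * q₁) / (δ + δ' * q₁ + δ'' * q₁ ^ 2)) := by
  have hε0 : 0 < ε := by rw [hε]; linarith
  have hden : ∀ q ∈ Set.Icc (0:ℝ) 1, 0 < δ + δ' * q + δ'' * q ^ 2 := by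
    intro q hq
    obtain ⟨hq0, hq1⟩ := hq
    nlinarith [mul_nonneg hδ'0 hq0, mul_nonneg hδ''0 (sq_nonneg q)]
  refine ⟨hden, fun q₁ q₂ h1 h12 h2 => ?_⟩
  have hq20 : (0:ℝ) ≤ q₂ := le_trans h1 h12
  have hd1 : 0 < δ + δ' * q₁ + δ'' * q₁ ^ 2 := hden q₁ ⟨h1, le_trans h12 h2⟩
  have hd2 : 0 < δ + δ' * q₂ + δ'' * q₂ ^ 2 := hden q₂ ⟨hq20, h2⟩
  rw [div_le_div_iff₀ hd2 hd1]
  have t1 : 0 ≤ (q₂ - q₁) * (ε * δ' - ε' * δ) :=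
    mul_nonneg (by linarith) hA
  have t2 : 0 ≤ (q₂ - q₁) * (q₁ + q₂) * (ε * δ'') :=
    mul_nonneg (mul_nonneg (by linarith) (by linarith))
      (mul_nonneg (le_of_lt hε0) hδ''0)
  have t3 : 0 ≤ (q₂ - q₁) * (q₁ * q₂) * (ε' * δ'') :=
    mul_nonneg (mul_nonneg (by linarith) (mul_nonneg h1 hq20))
      (mul_nonneg hε'0 hδ''0)
  nlinarith [t1, t2, t3]

/-- Under the admissibility constraints, with `p_con ∈ (0,1]`,
`γ ≥ 0` and `H ∈ [0, 3/4]`, the denominator `δ + δ′·q + δ″·q²` is strictly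
positive for all `q ∈ [0,1]`, and the mean occupancy time
`E_occ(q) = (ε + ε′·q)/(δ + δ′·q + δ″·q²)` is non-increasing on `[0,1]`. -/
theorem Eocc_denom_pos_and_antitone (n : ℕ) (hn : 1 ≤ n) (p : ℝ)
    (hp : p ∈ Set.Icc (0:ℝ) 1)
    (a b c d : ℕ → ℝ) (hadm : Admissible n a b c d)
    (pcon γ H : ℝ) (hpcon : pcon ∈ Set.Ioc (0:ℝ) 1) (hγ : 0 ≤ γ)
    (hH : H ∈ Set.Icc (0:ℝ) (3/4))
    (P aa bb cc dd ε ε' δ δ' δ'' : ℝ)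
    (hP : P = 1 - (1 - p) ^ n)
    (haa : aa = agg n p a) (hbb : bb = agg n p b)
    (hcc : cc = agg n p c) (hdd : dd = agg n p d)
    (hε : ε = γ + pcon)
    (hε' : ε' = (1 - pcon) * (P - aa + H * cc))
    (hδ : δ = (γ + pcon) * pcon)
    (hδ' : δ' = (1 - pcon) * (γ * P + 2 * pcon * P - pcon * aa - (γ + pcon) * dd))
    (hδ'' : δ'' = (1 - pcon) ^ 2 * (P ^ 2 - P * aa - P * dd + aa * dd - bb * cc)) :
    (∀ q ∈ Set.Icc (0:ℝ) 1, 0 < δ + δ' * q + δ'' * q ^ 2) ∧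
    (∀ q₁ q₂ : ℝ, 0 ≤ q₁ → q₁ ≤ q₂ → q₂ ≤ 1 →
      (ε + ε' * q₂) / (δ + δ' * q₂ + δ'' * q₂ ^ 2)
        ≤ (ε + ε' * q₁) / (δ + δ' * q₁ + δ'' * q₁ ^ 2)) := by
  obtain ⟨hs0, hs1⟩ := hpcon
  obtain ⟨hH0, hH1⟩ := hH
  have hw : ∀ k ∈ Finset.Icc 1 n, 0 ≤ wgt n p k := fun k _ => wgt_nonneg n p hp k
  have hPsum : P = ∑ k ∈ Finset.Icc 1 n, wgt n p k := by rw [hP, sum_wgt]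
  -- aggregated bounds
  have hd0 : 0 ≤ dd := by
    rw [hdd, agg]
    exact Finset.sum_nonneg fun k hk => mul_nonneg ((hadm k hk).1.1) (hw k hk)
  have hdP : dd ≤ P := by
    rw [hdd, agg, hPsum]
    exact Finset.sum_le_sum fun k hk =>
      mul_le_of_le_one_left (hw k hk) ((hadm k hk).1.2)
  have hb0 : 0 ≤ bb := by
    rw [hbb, agg]
    exact Finset.sum_nonneg fun k hk => mul_nonneg ((hadm k hk).2.2.1.1) (hw k hk)
  have hbd : bb ≤ (3/4) * dd := by
    rw [hbb, hdd, agg, agg, Finset.mul_sum]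
    refine Finset.sum_le_sum fun k hk => ?_
    have h := mul_le_mul_of_nonneg_right ((hadm k hk).2.2.1.2) (hw k hk)
    linarith [h, mul_assoc (3/4 : ℝ) (d k) (wgt n p k)]
  have hclo : -(4/3) * dd ≤ cc := by
    rw [hcc, hdd, agg, agg, Finset.mul_sum]
    refine Finset.sum_le_sum fun k hk => ?_
    have h := mul_le_mul_of_nonneg_right ((hadm k hk).2.1.1) (hw k hk)
    linarith [h, mul_assoc (-(4/3) : ℝ) (d k) (wgt n p k)]
  have hchi : cc ≤ (4/3) * (P - dd) := by
    have h : cc ≤ ∑ k ∈ Finset.Icc 1 n, ((4/3) * (1 - d k)) * wgt n p k := by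
      rw [hcc, agg]
      exact Finset.sum_le_sum fun k hk =>
        mul_le_mul_of_nonneg_right ((hadm k hk).2.1.2) (hw k hk)
    have h2 : ∑ k ∈ Finset.Icc 1 n, ((4/3) * (1 - d k)) * wgt n p k
        = (4/3) * ((∑ k ∈ Finset.Icc 1 n, wgt n p k)
            - ∑ k ∈ Finset.Icc 1 n, d k * wgt n p k) := by
      rw [← Finset.sum_sub_distrib, Finset.mul_sum]
      exact Finset.sum_congr rfl fun k _ => by ring
    rw [h2, ← hPsum] at h
    rw [hdd, agg]
    exact h
  have halo : -(4/3) * bb ≤ aa := by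
    rw [haa, hbb, agg, agg, Finset.mul_sum]
    refine Finset.sum_le_sum fun k hk => ?_
    have h := mul_le_mul_of_nonneg_right ((hadm k hk).2.2.2.1) (hw k hk)
    linarith [h, mul_assoc (-(4/3) : ℝ) (b k) (wgt n p k)]
  have hahi : aa ≤ -(4/3) * bb + (3/4) * cc + dd := by
    have h : aa ≤ ∑ k ∈ Finset.Icc 1 n,
        (-(4/3) * b k + (3/4) * c k + d k) * wgt n p k := by
      rw [haa, agg]
      exact Finset.sum_le_sum fun k hk =>
        mul_le_mul_of_nonneg_right ((hadm k hk).2.2.2.2) (hw k hk)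
    have h2 : ∑ k ∈ Finset.Icc 1 n, (-(4/3) * b k + (3/4) * c k + d k) * wgt n p k
        = -(4/3) * (∑ k ∈ Finset.Icc 1 n, b k * wgt n p k)
          + (3/4) * (∑ k ∈ Finset.Icc 1 n, c k * wgt n p k)
          + ∑ k ∈ Finset.Icc 1 n, d k * wgt n p k := by
      rw [Finset.mul_sum, Finset.mul_sum, ← Finset.sum_add_distrib,
        ← Finset.sum_add_distrib]
      exact Finset.sum_congr rfl fun k _ => by ring
    rw [h2] at h
    rw [hbb, hcc, hdd, agg, agg, agg]
    exact h
  obtain ⟨f1, f2, f3, f4⟩ := scalar_facts pcon γ H P aa bb cc dd hs0 hs1 hγ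
    hH0 hH1 hd0 hdP hb0 hbd hclo hchi halo hahi
  have hu : (0:ℝ) ≤ 1 - pcon := by linarith
  have hε'0 : 0 ≤ ε' := by rw [hε']; exact mul_nonneg hu f1
  have hδ0 : 0 < δ := by rw [hδ]; positivity
  have hδ'0 : 0 ≤ δ' := by rw [hδ']; exact mul_nonneg hu f2
  have hδ''0 : 0 ≤ δ'' := by rw [hδ'']; exact mul_nonneg (sq_nonneg _) f3
  have hA : 0 ≤ ε * δ' - ε' * δ := by
    have hid : ε * δ' - ε' * δ
        = (γ + pcon) * (1 - pcon) * (γ * (P - dd) + pcon * (P - dd - H * cc)) := by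
      rw [hε, hε', hδ, hδ']; ring
    rw [hid]
    exact mul_nonneg (mul_nonneg (by linarith) hu) (by linarith)
  exact scalar_main pcon γ ε ε' δ δ' δ'' hε hs0 hγ hδ0 hδ'0 hδ''0 hε'0 hA
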